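/- arXiv:2012.06011 — 2 statements merged into one kernel-verified Lean document; each statement's English description precedes it below -/
import Mathlib

section
/- Let K be a projectively faithful lattice polytope in ℝ^n. Then the following are equivalent: (a) K is locally solid; (b) there exists an integer m ≥ n−1 such that mK ∩ ℤ^n = m·(K ∩ ℤ^n); (c) for all but finitely many positive integers m, mK ∩ ℤ^n = m·(K ∩ ℤ^n). -/
open Pointwise

/-- The set of lattice points (points with integer coordinates) of `ℝ^n`. -/
def latticePoints (n : ℕ) : Set (Fin n → ℝ) := {x | ∀ i, ∃ z : ℤ, x i = (z : ℝ)}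

/-- The `k`-fold Minkowski sum `A + A + ⋯ + A` (`k` times) of a subset `A` of `ℝ^n`
(by convention the `0`-fold sum is `{0}`). -/
def nsmulSet {n : ℕ} : ℕ → Set (Fin n → ℝ) → Set (Fin n → ℝ)
  | 0, _ => {0}
  | k + 1, A => A + nsmulSet k A

/-- A lattice polytope in `ℝ^n`: the convex hull of a finite nonempty set of lattice points. -/
def IsLatticePolytope {n : ℕ} (K : Set (Fin n → ℝ)) : Prop :=
  ∃ S : Set (Fin n → ℝ), S.Finite ∧ S.Nonempty ∧ S ⊆ latticePoints n ∧ K = convexHull ℝ S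

/-- A lattice polytope is projectively faithful if the differences of its lattice points
generate the full lattice `ℤ^n` as an abelian group. -/
def ProjectivelyFaithful {n : ℕ} (K : Set (Fin n → ℝ)) : Prop :=
  (AddSubgroup.closure ((K ∩ latticePoints n) - (K ∩ latticePoints n)) :
    Set (Fin n → ℝ)) = latticePoints n

/-- The lattice cone `C_v = ⋃_{m ≥ 1} m((K - v) ∩ ℤ^n)` at a point `v`, where `m(⬝)` is
the `m`-fold Minkowski sum. -/
def latticeCone {n : ℕ} (K : Set (Fin n → ℝ)) (v : Fin n → ℝ) : Set (Fin n → ℝ) :=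
  ⋃ (m : ℕ) (_ : 1 ≤ m), nsmulSet m (((fun x => x - v) '' K) ∩ latticePoints n)

/-- `C_v` is unperforated: any lattice point with a positive multiple in `C_v` is itself
in `C_v`. -/
def Unperforated {n : ℕ} (C : Set (Fin n → ℝ)) : Prop :=
  ∀ x ∈ latticePoints n, ∀ m : ℕ, 0 < m → (m : ℝ) • x ∈ C → x ∈ C

/-- A lattice polytope is locally solid if the cone `C_v` is unperforated for every
extreme point `v` of `K`. -/
def LocallySolid {n : ℕ} (K : Set (Fin n → ℝ)) : Prop :=
  ∀ v ∈ K.extremePoints ℝ, Unperforated (latticeCone K v)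

/-!
Translating a vertex `v` of `K` to the origin, `C_v` is the monoid generated by the lattice points
of `K - v`, and it is unperforated exactly when it contains every lattice point of the cone over
`K - v` (`IsSaturated`): by a conic Carathéodory argument such a point is a nonnegative
combination of linearly independent lattice vectors, whose coefficients are then rational.

(b) ⇒ (a): write a lattice point of the cone as `∑ μᵢ uᵢ` with at most `n` linearly independent
lattice points `uᵢ` of `K - v` and strip off the integer parts of the `μᵢ`. If the fractional
parts sum to more than `m ≥ n - 1`, there are exactly `m + 1` of them, and for a suitable `T` the
fractional parts of the `T μᵢ` are the coefficients of a lattice point of `m (K - v)` whose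
difference from the point lies in `K - v`.

(a) ⇒ (c): by Carathéodory a lattice point of `m K` is `∑ μᵤ u` over at most `n + 1` vertices, one
of them with `μᵤ ≥ m / (n + 1)`. Its fractional part `∑ {μᵤ} u` is one of the finitely many
lattice points of the dilates `r K`, `r ≤ n`, and saturation at `u` turns it, together with enough
copies of `u`, into a sum of lattice points of `K`.
-/

variable {n : ℕ}

section Lattice

def latticeAddSubgroup (n : ℕ) : AddSubgroup (Fin n → ℝ) where
  carrier := latticePoints n
  add_mem' {x y} hx hy i := by
    obtain ⟨a, ha⟩ := hx i
    obtain ⟨b, hb⟩ := hy i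
    exact ⟨a + b, by simp [ha, hb]⟩
  zero_mem' _ := ⟨0, by simp⟩
  neg_mem' {x} hx i := by
    obtain ⟨a, ha⟩ := hx i
    exact ⟨-a, by simp [ha]⟩

theorem mem_latticeAddSubgroup {x : Fin n → ℝ} :
    x ∈ latticeAddSubgroup n ↔ x ∈ latticePoints n := Iff.rfl

theorem intCast_smul_mem_latticePoints {x : Fin n → ℝ} (hx : x ∈ latticePoints n) (c : ℤ) :
    (c : ℝ) • x ∈ latticePoints n := by
  rw [Int.cast_smul_eq_zsmul]
  exact zsmul_mem (mem_latticeAddSubgroup.2 hx) c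

theorem natCast_smul_mem_latticePoints {x : Fin n → ℝ} (hx : x ∈ latticePoints n) (c : ℕ) :
    (c : ℝ) • x ∈ latticePoints n := by
  exact_mod_cast intCast_smul_mem_latticePoints hx c

theorem nsmul_subset_latticePoints {A : Set (Fin n → ℝ)} (hA : A ⊆ latticePoints n) (k : ℕ) :
    k • A ⊆ latticePoints n := by
  induction k with
  | zero =>
    rintro x hx
    rw [zero_nsmul, Set.mem_zero] at hx
    exact hx ▸ (latticeAddSubgroup n).zero_mem
  | succ k ih =>
    rw [succ_nsmul]
    rintro _ ⟨a, ha, b, hb, rfl⟩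
    exact (latticeAddSubgroup n).add_mem (ih ha) (hA hb)

theorem Bornology.IsBounded.finite_inter_latticePoints {B : Set (Fin n → ℝ)}
    (hB : Bornology.IsBounded B) : (B ∩ latticePoints n).Finite := by
  obtain ⟨R, hR⟩ := hB.subset_closedBall 0
  refine ((Set.finite_Icc (fun _ : Fin n => -⌈R⌉) fun _ => ⌈R⌉).image
    fun z i => (z i : ℝ)).subset ?_
  rintro x ⟨hxB, hx⟩
  choose z hz using hx
  have hzR (i : Fin n) : |z i| ≤ ⌈R⌉ := by
    have : |(z i : ℝ)| ≤ R := by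
      rw [← hz i, ← Real.norm_eq_abs]
      exact (norm_le_pi_norm x i).trans (mem_closedBall_zero_iff.1 (hR hxB))
    exact_mod_cast this.trans (Int.le_ceil R)
  exact ⟨z, ⟨fun i => (abs_le.1 (hzR i)).1, fun i => (abs_le.1 (hzR i)).2⟩,
    funext fun i => (hz i).symm⟩

end Lattice

section MinkowskiMultiples

/-- For `k : ℕ` and a set `A`, `k • A` is Mathlib's iterated Minkowski sum `A + ⋯ + A`, not the
dilation `(k : ℝ) • A`. -/
theorem nsmulSet_eq_nsmul (k : ℕ) (A : Set (Fin n → ℝ)) : nsmulSet k A = k • A := by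
  induction k with
  | zero => rfl
  | succ k ih => rw [succ_nsmul', ← ih]; rfl

theorem Set.add_mem_add_nsmul {E : Type*} [AddCommMonoid E] {A : Set E} {x y : E} {k l : ℕ}
    (hx : x ∈ k • A) (hy : y ∈ l • A) : x + y ∈ (k + l) • A :=
  add_nsmul A k l ▸ Set.add_mem_add hx hy

theorem Set.sum_nsmul_mem_nsmul {E ι : Type*} [AddCommMonoid E] {A : Set E} (t : Finset ι)
    (c : ι → ℕ) {p : ι → E} (hp : ∀ i ∈ t, p i ∈ A) : ∑ i ∈ t, c i • p i ∈ (∑ i ∈ t, c i) • A := by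
  rw [← Finset.sum_nsmul_assoc]
  exact Set.finsetSum_mem_finsetSum _ _ _ fun i hi => Set.nsmul_mem_nsmul (hp i hi)

end MinkowskiMultiples

section Convex

variable {E : Type*} [AddCommGroup E] [Module ℝ E] {K : Set E}

theorem Convex.nsmul_subset_smul (hK : Convex ℝ K) (hK₀ : K.Nonempty) {A : Set E}
    (hAK : A ⊆ K) (k : ℕ) : k • A ⊆ (k : ℝ) • K := by
  induction k with
  | zero => rw [zero_nsmul, Nat.cast_zero, Set.zero_smul_set hK₀]
  | succ k ih =>
    rw [succ_nsmul, Nat.cast_succ, hK.add_smul k.cast_nonneg zero_le_one, one_smul]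
    exact Set.add_subset_add ih hAK

theorem Convex.sum_smul_mem_smul (hK : Convex ℝ K) (hK₀ : K.Nonempty) {ι : Type*}
    (t : Finset ι) {β : ι → ℝ} {p : ι → E} (hβ : ∀ i ∈ t, 0 ≤ β i) (hp : ∀ i ∈ t, p i ∈ K) :
    ∑ i ∈ t, β i • p i ∈ (∑ i ∈ t, β i) • K := by
  rcases (Finset.sum_nonneg hβ).eq_or_lt with h | h
  · have hβ₀ := (Finset.sum_eq_zero_iff_of_nonneg hβ).1 h.symm
    rw [← h, Set.zero_smul_set hK₀, Finset.sum_eq_zero fun i hi => by rw [hβ₀ i hi, zero_smul]]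
    rfl
  · have := Set.smul_mem_smul_set (a := ∑ i ∈ t, β i) (hK.centerMass_mem hβ h hp)
    rwa [Finset.centerMass, smul_inv_smul₀ h.ne'] at this

theorem Convex.smul_subset_smul_of_zero_mem (hK : Convex ℝ K) (h₀ : (0 : E) ∈ K) {a b : ℝ}
    (ha : 0 ≤ a) (hab : a ≤ b) : a • K ⊆ b • K := by
  rintro _ ⟨x, hx, rfl⟩
  rcases ha.eq_or_lt with rfl | ha
  · exact ⟨0, h₀, by simp⟩
  · have hb := ha.trans_le hab
    refine ⟨(a / b) • x,
      hK.smul_mem_of_zero_mem h₀ hx ⟨by positivity, div_le_one_of_le₀ hab hb.le⟩, ?_⟩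
    simp only [smul_smul, mul_div_cancel₀ _ hb.ne']

theorem Convex.sum_smul_mem_smul_of_le (hK : Convex ℝ K) (h₀ : (0 : E) ∈ K) {ι : Type*}
    (t : Finset ι) {β : ι → ℝ} {p : ι → E} (hβ : ∀ i ∈ t, 0 ≤ β i) (hp : ∀ i ∈ t, p i ∈ K)
    {c : ℝ} (hc : ∑ i ∈ t, β i ≤ c) : ∑ i ∈ t, β i • p i ∈ c • K :=
  hK.smul_subset_smul_of_zero_mem h₀ (Finset.sum_nonneg hβ) hc
    (hK.sum_smul_mem_smul ⟨0, h₀⟩ t hβ hp)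

end Convex

section Translation

variable {E : Type*} [AddCommGroup E]

theorem nsmul_image_sub (k : ℕ) (v : E) (B : Set E) :
    k • ((fun x => x - v) '' B) = (fun x => x - k • v) '' (k • B) := by
  simp only [← Set.sub_singleton, nsmul_sub, Set.nsmul_singleton]

theorem smul_image_sub [Module ℝ E] (r : ℝ) (v : E) (B : Set E) :
    r • ((fun x => x - v) '' B) = (fun x => x - r • v) '' (r • B) := by
  simp only [← Set.image_smul, Set.image_image, smul_sub]

theorem image_sub_convexHull [Module ℝ E] (v : E) (S : Set E) :
    (fun x => x - v) '' convexHull ℝ S = convexHull ℝ ((fun x => x - v) '' S) := by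
  simp only [← Set.sub_singleton, convexHull_sub, convexHull_singleton]

theorem AddSubgroup.image_sub_inter {L : AddSubgroup E} {v : E} (hv : v ∈ L) (B : Set E) :
    ((fun x => x - v) '' B) ∩ L = (fun x => x - v) '' (B ∩ L) := by
  rw [← Set.image_inter_preimage]
  congr 2
  ext x
  simp [sub_eq_add_neg, add_mem_cancel_right (neg_mem hv)]

theorem image_sub_inter_latticePoints {v : Fin n → ℝ} (hv : v ∈ latticePoints n)
    (B : Set (Fin n → ℝ)) :
    ((fun x => x - v) '' B) ∩ latticePoints n = (fun x => x - v) '' (B ∩ latticePoints n) :=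
  (latticeAddSubgroup n).image_sub_inter hv B

theorem image_sub_subset_latticePoints {S : Set (Fin n → ℝ)} (hS : S ⊆ latticePoints n)
    {v : Fin n → ℝ} (hv : v ∈ latticePoints n) : (fun x => x - v) '' S ⊆ latticePoints n := by
  rintro _ ⟨x, hx, rfl⟩
  exact (latticeAddSubgroup n).sub_mem (hS hx) hv

end Translation

section Caratheodory

variable {𝕜 E : Type*} [Field 𝕜] [LinearOrder 𝕜] [IsStrictOrderedRing 𝕜] [AddCommGroup E]
  [Module 𝕜 E]

theorem exists_erase_sum_smul_eq [DecidableEq E] {s : Finset E}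
    (hs : ¬LinearIndepOn 𝕜 id (s : Set E)) {w : E → 𝕜} (hw : ∀ u ∈ s, 0 ≤ w u) :
    ∃ u₀ ∈ s, ∃ w' : E → 𝕜, (∀ u ∈ s.erase u₀, 0 ≤ w' u) ∧
      ∑ u ∈ s.erase u₀, w' u • u = ∑ u ∈ s, w u • u := by
  obtain ⟨g, hg, hgpos⟩ : ∃ g : E → 𝕜, ∑ u ∈ s, g u • u = 0 ∧ ∃ u ∈ s, 0 < g u := by
    obtain ⟨f, hf, i, hi, hfi⟩ := not_linearIndepOn_finset_iff.1 hs
    rcases hfi.lt_or_gt with h | h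
    · exact ⟨-f, by simpa [neg_smul, Finset.sum_neg_distrib] using hf, i, hi, by simpa using h⟩
    · exact ⟨f, by simpa using hf, i, hi, h⟩
  obtain ⟨u₀, hu₀, hmin⟩ := (s.filter (0 < g ·)).exists_min_image (fun u => w u / g u) <| by
    obtain ⟨i, hi, h⟩ := hgpos
    exact ⟨i, Finset.mem_filter.2 ⟨hi, h⟩⟩
  rw [Finset.mem_filter] at hu₀
  set ε := w u₀ / g u₀
  refine ⟨u₀, hu₀.1, fun u => w u - ε * g u, fun u hu => ?_, ?_⟩
  · have hus := Finset.mem_of_mem_erase hu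
    rcases le_or_gt (g u) 0 with h | h
    · have := mul_nonpos_of_nonneg_of_nonpos (div_nonneg (hw _ hu₀.1) hu₀.2.le) h
      linarith [hw u hus]
    · have := hmin u (Finset.mem_filter.2 ⟨hus, h⟩)
      rw [le_div_iff₀ h] at this
      linarith
  · rw [Finset.sum_erase _ (by simp [ε, hu₀.2.ne'])]
    simp only [sub_smul, mul_smul, Finset.sum_sub_distrib, ← Finset.smul_sum, hg, smul_zero,
      sub_zero]

theorem exists_linearIndepOn_sum_smul_eq (s : Finset E) {w : E → 𝕜} (hw : ∀ u ∈ s, 0 ≤ w u) :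
    ∃ t ⊆ s, LinearIndepOn 𝕜 id (t : Set E) ∧ ∃ μ : E → 𝕜, (∀ u ∈ t, 0 ≤ μ u) ∧
      ∑ u ∈ t, μ u • u = ∑ u ∈ s, w u • u := by
  classical
  induction s using Finset.strongInduction generalizing w with
  | H s ih =>
  by_cases hs : LinearIndepOn 𝕜 id (s : Set E)
  · exact ⟨s, subset_rfl, hs, w, hw, rfl⟩
  obtain ⟨u₀, hu₀, w', hw', heq⟩ := exists_erase_sum_smul_eq hs hw
  obtain ⟨t, hts, ht, μ, hμ, hsum⟩ := ih _ (Finset.erase_ssubset hu₀) hw'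
  exact ⟨t, hts.trans (Finset.erase_subset _ _), ht, μ, hμ, hsum.trans heq⟩

theorem exists_linearIndepOn_of_mem_smul_convexHull {S : Set E} {c : 𝕜} (hc : 0 ≤ c) {x : E}
    (hx : x ∈ c • convexHull 𝕜 S) :
    ∃ t : Finset E, ↑t ⊆ S ∧ LinearIndepOn 𝕜 id (t : Set E) ∧
      ∃ μ : E → 𝕜, (∀ u ∈ t, 0 ≤ μ u) ∧ ∑ u ∈ t, μ u • u = x := by
  obtain ⟨y, hy, rfl⟩ := hx
  rw [convexHull_eq_union_convexHull_finite_subsets, Set.mem_iUnion₂] at hy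
  obtain ⟨s, hsS, hys⟩ := hy
  obtain ⟨w, hw, -, rfl⟩ := Finset.mem_convexHull'.1 hys
  obtain ⟨t, hts, ht, μ, hμ, hsum⟩ :=
    exists_linearIndepOn_sum_smul_eq s (w := fun u => c * w u) fun u hu => mul_nonneg hc (hw u hu)
  refine ⟨t, (Finset.coe_subset.2 hts).trans hsS, ht, μ, hμ, ?_⟩
  simp only [hsum, Finset.smul_sum, mul_smul]

theorem exists_finset_sum_smul_eq_of_mem_smul_convexHull [FiniteDimensional 𝕜 E] {S : Set E}
    {c : 𝕜} (hc : 0 ≤ c) {z : E} (hz : z ∈ c • convexHull 𝕜 S) :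
    ∃ t : Finset E, ↑t ⊆ S ∧ t.card ≤ Module.finrank 𝕜 E + 1 ∧ ∃ μ : E → 𝕜,
      (∀ u ∈ t, 0 ≤ μ u) ∧ ∑ u ∈ t, μ u = c ∧ ∑ u ∈ t, μ u • u = z := by
  obtain ⟨y, hy, rfl⟩ := hz
  rw [convexHull_eq_union, Set.mem_iUnion₂] at hy
  obtain ⟨t, htS, hy⟩ := hy
  rw [Set.mem_iUnion] at hy
  obtain ⟨ht, hyt⟩ := hy
  obtain ⟨w, hw₀, hw₁, rfl⟩ := Finset.mem_convexHull'.1 hyt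
  refine ⟨t, htS, ?_, fun u => c * w u, fun u hu => ?_, ?_, ?_⟩
  · simpa using ht.card_le_finrank_succ.trans (Nat.succ_le_succ (Submodule.finrank_le _))
  · exact mul_nonneg hc (hw₀ u hu)
  · rw [← Finset.mul_sum, hw₁, mul_one]
  · simp only [Finset.smul_sum, mul_smul]

end Caratheodory

section Rationality

open Matrix

theorem Matrix.det_transpose_mul_self_ne_zero {R m k : Type*} [Field R] [LinearOrder R]
    [IsStrictOrderedRing R] [Fintype m] [Fintype k] [DecidableEq k] {M : Matrix m k R}
    (hM : LinearIndependent R M.col) : (Mᵀ * M).det ≠ 0 := by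
  intro h
  obtain ⟨v, hv, hMv⟩ := Matrix.exists_mulVec_eq_zero_iff.2 h
  have : v ∈ LinearMap.ker (Mᵀ * M).mulVecLin := hMv
  rw [Matrix.ker_mulVecLin_transpose_mul_self] at this
  exact hv (Matrix.mulVec_injective_iff.2 hM (this.trans (Matrix.mulVec_zero M).symm))

theorem exists_nat_mul_eq_intCast_of_linearIndependent {ι : Type*} [Fintype ι]
    {u : ι → Fin n → ℝ} (hu : ∀ i, u i ∈ latticePoints n) (hli : LinearIndependent ℝ u)
    {μ : ι → ℝ} (hμ : ∑ i, μ i • u i ∈ latticePoints n) :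
    ∃ d : ℕ, 0 < d ∧ ∀ i, ∃ z : ℤ, (d : ℝ) * μ i = z := by
  classical
  choose U hU using hu
  choose x hx using hμ
  let cast : ℤ →+* ℝ := Int.castRingHom ℝ
  let A : Matrix (Fin n) ι ℤ := Matrix.of fun j i => U i j
  let G : Matrix ι ι ℤ := Aᵀ * A
  have hAμ : A.map cast *ᵥ μ = cast ∘ x := by
    ext j
    simp [A, cast, Matrix.mulVec, dotProduct, ← hx, Finset.sum_apply, hU, mul_comm]
  have hGR : G.map cast = (A.map cast)ᵀ * A.map cast := by
    simp [G, Matrix.map_mul, Matrix.transpose_map]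
  have hdet : G.det ≠ 0 := by
    have hcol : (A.map cast).col = u := by
      ext i j
      simp [A, cast, hU]
    have := Matrix.det_transpose_mul_self_ne_zero (hcol ▸ hli)
    rwa [← hGR, ← RingHom.mapMatrix_apply, ← RingHom.map_det,
      map_ne_zero_iff _ cast.injective_int] at this
  -- Cramer's rule for the integral Gram system `G μ = Aᵀ x`
  have hkey : (G.det : ℝ) • μ = cast ∘ (G.adjugate *ᵥ (Aᵀ *ᵥ x)) := by
    have hdetR : (G.map cast).det = G.det := (RingHom.map_det cast G).symm
    have hadj : (G.map cast).adjugate = G.adjugate.map cast := (RingHom.map_adjugate cast G).symm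
    calc (G.det : ℝ) • μ = ((G.map cast).adjugate * G.map cast) *ᵥ μ := by
          rw [Matrix.adjugate_mul, hdetR, Matrix.smul_mulVec, Matrix.one_mulVec]
      _ = G.adjugate.map cast *ᵥ ((A.map cast)ᵀ *ᵥ (A.map cast *ᵥ μ)) := by
          rw [← Matrix.mulVec_mulVec, hadj, hGR, ← Matrix.mulVec_mulVec]
      _ = cast ∘ (G.adjugate *ᵥ (Aᵀ *ᵥ x)) := by
          ext i
          rw [hAμ, Function.comp_apply, RingHom.map_mulVec, ← Matrix.transpose_map]
          congr 1
          ext j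
          exact (RingHom.map_mulVec cast _ _ j).symm
  refine ⟨G.det.natAbs, Int.natAbs_pos.2 hdet,
    fun i => ⟨G.det.sign * (G.adjugate *ᵥ (Aᵀ *ᵥ x)) i, ?_⟩⟩
  have hi : (G.det : ℝ) * μ i = (G.adjugate *ᵥ (Aᵀ *ᵥ x)) i := congrFun hkey i
  rw [Int.cast_mul, ← hi, ← mul_assoc, ← Int.cast_mul, Int.sign_mul_self_eq_natAbs,
    Int.cast_natCast]

end Rationality

section Pigeonhole

theorem Int.fract_add_eq_or {R : Type*} [Field R] [LinearOrder R] [IsStrictOrderedRing R]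
    [FloorRing R] {a b : R} (hb : b ∈ Set.Ico 0 1) :
    Int.fract (a + b) = Int.fract a + b ∨ Int.fract (a + b) = Int.fract a + b - 1 := by
  have hsplit : a + b = ⌊a⌋ + (Int.fract a + b) := by rw [← add_assoc, Int.floor_add_fract]
  rw [hsplit, Int.fract_intCast_add]
  have := Int.fract_nonneg a
  have := Int.fract_lt_one a
  rcases lt_or_ge (Int.fract a + b) 1 with h | h
  · exact Or.inl (Int.fract_eq_self.2 ⟨by linarith [hb.1], h⟩)
  · right
    rw [← Int.fract_sub_one, Int.fract_eq_self]
    constructor <;> linarith [hb.2]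

variable {ι : Type*} [Fintype ι]

theorem exists_le_fract_mul (hι : 2 ≤ Fintype.card ι) {ν : ι → ℝ} (hν : ∀ i, ν i ∈ Set.Ioo 0 1)
    (hsum : ∑ i, ν i < 1) {d : ℕ} (hd : 0 < d) (hdν : ∀ i, ∃ z : ℤ, (d : ℝ) * ν i = z) :
    ∃ T : ℕ, (∀ i, ν i ≤ Int.fract (T * ν i)) ∧ 1 ≤ ∑ i, Int.fract (T * ν i) ∧
      ∑ i, Int.fract (T * ν i) < 1 + ∑ i, ν i := by
  set S : ℕ → ℝ := fun j => ∑ i, Int.fract (j * ν i)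
  have hex : ∃ j, 1 ≤ S j := by
    refine ⟨d - 1, ?_⟩
    have hfract (i : ι) : Int.fract (((d - 1 : ℕ) : ℝ) * ν i) = 1 - ν i := by
      obtain ⟨z, hz⟩ := hdν i
      have hνi : Int.fract (ν i) = ν i := Int.fract_eq_self.2 ⟨(hν i).1.le, (hν i).2⟩
      rw [Nat.cast_pred hd, sub_one_mul, hz, sub_eq_add_neg, Int.fract_intCast_add,
        Int.fract_neg (by rw [hνi]; exact (hν i).1.ne'), hνi]
    simp only [S, hfract, Finset.sum_sub_distrib, Finset.sum_const, Finset.card_univ, nsmul_one]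
    have : (2 : ℝ) ≤ Fintype.card ι := by exact_mod_cast hι
    linarith
  set T := Nat.find hex
  obtain ⟨T', hT'⟩ : ∃ T', T = T' + 1 := Nat.exists_eq_succ_of_ne_zero fun h => by
    have := Nat.find_spec hex
    simp [S, show Nat.find hex = 0 from h] at this
    linarith
  have hST : 1 ≤ S T := Nat.find_spec hex
  have hST' : S T' < 1 := not_le.1 (Nat.find_min hex (by omega))
  have hstep (i : ι) : Int.fract (T * ν i) = Int.fract (T' * ν i) + ν i ∨
      Int.fract (T * ν i) = Int.fract (T' * ν i) + ν i - 1 := by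
    rw [hT', Nat.cast_succ, add_one_mul]
    exact Int.fract_add_eq_or ⟨(hν i).1.le, (hν i).2⟩
  -- `T` is the first time the fractional parts add up to `1`, so none of them wraps at step `T`
  have hsame (i : ι) : Int.fract (T * ν i) = Int.fract (T' * ν i) + ν i := by
    have hnonneg (j : ι) : 0 ≤ Int.fract (T' * ν j) + ν j - Int.fract (T * ν j) := by
      rcases hstep j with h | h <;> linarith
    have hlt : ∑ j, (Int.fract (T' * ν j) + ν j - Int.fract (T * ν j)) < 1 := by
      rw [Finset.sum_sub_distrib, Finset.sum_add_distrib]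
      change S T' + _ - S T < 1
      linarith
    have := Finset.single_le_sum (fun j _ => hnonneg j) (Finset.mem_univ i)
    rcases hstep i with h | h
    · exact h
    · linarith
  refine ⟨T, fun i => ?_, hST, ?_⟩
  · rw [hsame i]
    linarith [Int.fract_nonneg ((T' : ℝ) * ν i)]
  · rw [Finset.sum_congr rfl fun i _ => hsame i, Finset.sum_add_distrib]
    change S T' + _ < _
    linarith

theorem exists_fract_mul_le (hι : 2 ≤ Fintype.card ι) {μ : ι → ℝ} (hμ : ∀ i, μ i ∈ Set.Ioo 0 1)
    (hsum : (Fintype.card ι : ℝ) - 1 < ∑ i, μ i) {d : ℕ} (hd : 0 < d)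
    (hdμ : ∀ i, ∃ z : ℤ, (d : ℝ) * μ i = z) :
    ∃ T : ℕ, (∀ i, Int.fract (T * μ i) ≤ μ i) ∧
      ∑ i, Int.fract (T * μ i) ≤ Fintype.card ι - 1 ∧ ∑ i, (μ i - Int.fract (T * μ i)) ≤ 1 := by
  have hcard : ∑ i : ι, (1 : ℝ) = Fintype.card ι := by simp
  obtain ⟨T, hle, hge, hlt⟩ := exists_le_fract_mul hι (ν := fun i => 1 - μ i)
    (fun i => ⟨by linarith [(hμ i).2], by linarith [(hμ i).1]⟩)
    (by rw [Finset.sum_sub_distrib, hcard]; linarith) hd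
    fun i => by
      obtain ⟨z, hz⟩ := hdμ i
      exact ⟨d - z, by push_cast; rw [mul_sub, mul_one, hz]⟩
  have hfract (i : ι) : Int.fract (T * μ i) = 1 - Int.fract (T * (1 - μ i)) := by
    have hpos : Int.fract (T * (1 - μ i)) ≠ 0 :=
      (lt_of_lt_of_le (by linarith [(hμ i).2]) (hle i)).ne'
    have : (T : ℝ) * μ i = (T : ℤ) + -(T * (1 - μ i)) := by push_cast; ring
    rw [this, Int.fract_intCast_add, Int.fract_neg hpos]
  refine ⟨T, fun i => by rw [hfract]; linarith [hle i], ?_, ?_⟩ <;>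
    simp only [hfract, Finset.sum_sub_distrib, hcard] at hge hlt ⊢ <;> linarith

end Pigeonhole

section Saturation

def IsSaturated (K : Set (Fin n → ℝ)) : Prop :=
  ∀ x ∈ latticePoints n, ∀ c : ℝ, 0 ≤ c → x ∈ c • K → ∃ k : ℕ, x ∈ k • (K ∩ latticePoints n)

variable {K S : Set (Fin n → ℝ)}

theorem mem_succ_nsmul_of_lt_sum (hK : Convex ℝ K) (h₀ : (0 : Fin n → ℝ) ∈ K) {m : ℕ}
    (hm : 1 ≤ m) (heq : (m : ℝ) • K ∩ latticePoints n = m • (K ∩ latticePoints n))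
    {ι : Type*} [Fintype ι] {u : ι → Fin n → ℝ}
    (hu : ∀ i, u i ∈ K ∩ latticePoints n) (hli : LinearIndependent ℝ u)
    (hcard : Fintype.card ι ≤ m + 1) {μ : ι → ℝ} (hμ : ∀ i, μ i ∈ Set.Ico 0 1)
    (hsum : (m : ℝ) < ∑ i, μ i) (hx : ∑ i, μ i • u i ∈ latticePoints n) :
    ∑ i, μ i • u i ∈ (m + 1) • (K ∩ latticePoints n) := by
  classical
  have hcard_eq : Fintype.card ι = m + 1 := by
    have : ∑ i, μ i ≤ Fintype.card ι := by
      simpa using Finset.sum_le_card_nsmul Finset.univ μ 1 fun i _ => (hμ i).2.le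
    have : m < Fintype.card ι := by exact_mod_cast hsum.trans_le this
    omega
  have hpos (i : ι) : 0 < μ i := by
    have hrest : ∑ j ∈ Finset.univ.erase i, μ j ≤ m := by
      have := Finset.sum_le_card_nsmul (Finset.univ.erase i) μ 1 fun j _ => (hμ j).2.le
      simpa [Finset.card_erase_of_mem, hcard_eq] using this
    linarith [Finset.add_sum_erase Finset.univ μ (Finset.mem_univ i)]
  obtain ⟨d, hd, hdμ⟩ := exists_nat_mul_eq_intCast_of_linearIndependent (fun i => (hu i).2) hli hx
  obtain ⟨T, hle, hβ, hγ⟩ := exists_fract_mul_le (by omega) (fun i => ⟨hpos i, (hμ i).2⟩)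
    (by rw [hcard_eq]; push_cast; linarith) hd hdμ
  rw [hcard_eq, Nat.cast_succ, add_sub_cancel_right] at hβ
  set y := ∑ i, Int.fract (T * μ i) • u i
  have hy : y ∈ latticePoints n := by
    have : y = ((T : ℤ) : ℝ) • ∑ i, μ i • u i - ∑ i, ((⌊T * μ i⌋ : ℤ) : ℝ) • u i := by
      simp only [y, Int.fract, sub_smul, Finset.sum_sub_distrib, Finset.smul_sum, smul_smul,
        Int.cast_natCast]
    rw [this]
    exact (latticeAddSubgroup n).sub_mem (intCast_smul_mem_latticePoints hx _)
      (sum_mem fun i _ => intCast_smul_mem_latticePoints (hu i).2 _)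
  have hyA : y ∈ m • (K ∩ latticePoints n) := heq ▸
    ⟨hK.sum_smul_mem_smul_of_le h₀ _ (fun i _ => Int.fract_nonneg _) (fun i _ => (hu i).1) hβ, hy⟩
  have hxyA : ∑ i, μ i • u i - y ∈ 1 • (K ∩ latticePoints n) := by
    have hxy : ∑ i, μ i • u i - y = ∑ i, (μ i - Int.fract (T * μ i)) • u i := by
      simp only [y, sub_smul, Finset.sum_sub_distrib]
    rw [one_nsmul]
    refine ⟨?_, (latticeAddSubgroup n).sub_mem hx hy⟩
    rw [hxy, ← one_smul ℝ K]
    exact hK.sum_smul_mem_smul_of_le h₀ _ (fun i _ => sub_nonneg.2 (hle i)) (fun i _ => (hu i).1) hγ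
  simpa [add_comm] using Set.add_mem_add_nsmul hxyA hyA

theorem exists_mem_nsmul_of_linearIndependent (hK : Convex ℝ K) (h₀ : (0 : Fin n → ℝ) ∈ K)
    {m : ℕ} (hm : 1 ≤ m) (heq : (m : ℝ) • K ∩ latticePoints n = m • (K ∩ latticePoints n))
    {ι : Type*} [Fintype ι] {u : ι → Fin n → ℝ}
    (hu : ∀ i, u i ∈ K ∩ latticePoints n) (hli : LinearIndependent ℝ u)
    (hcard : Fintype.card ι ≤ m + 1) {μ : ι → ℝ} (hμ : ∀ i, 0 ≤ μ i)
    (hx : ∑ i, μ i • u i ∈ latticePoints n) :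
    ∃ k : ℕ, ∑ i, μ i • u i ∈ k • (K ∩ latticePoints n) := by
  set ρ : ι → ℝ := fun i => μ i - ⌊μ i⌋₊
  have hρ (i : ι) : ρ i ∈ Set.Ico 0 1 :=
    ⟨sub_nonneg.2 (Nat.floor_le (hμ i)), by linarith [Nat.lt_floor_add_one (μ i)]⟩
  have hsplit : ∑ i, μ i • u i = ∑ i, ρ i • u i + ∑ i, ⌊μ i⌋₊ • u i := by
    simp only [ρ, sub_smul, Finset.sum_sub_distrib, ← Nat.cast_smul_eq_nsmul ℝ, sub_add_cancel]
  have hρx : ∑ i, ρ i • u i ∈ latticePoints n := by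
    rw [eq_sub_of_add_eq hsplit.symm]
    exact (latticeAddSubgroup n).sub_mem hx (sum_mem fun i _ => nsmul_mem (hu i).2 _)
  obtain ⟨k, hk⟩ : ∃ k : ℕ, ∑ i, ρ i • u i ∈ k • (K ∩ latticePoints n) := by
    by_cases h : ∑ i, ρ i ≤ m
    · exact ⟨m, heq ▸
        ⟨hK.sum_smul_mem_smul_of_le h₀ _ (fun i _ => (hρ i).1) (fun i _ => (hu i).1) h, hρx⟩⟩
    · exact ⟨m + 1, mem_succ_nsmul_of_lt_sum hK h₀ hm heq hu hli hcard hρ (not_le.1 h) hρx⟩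
  exact ⟨_, hsplit ▸ Set.add_mem_add_nsmul hk (Set.sum_nsmul_mem_nsmul _ _ fun i _ => hu i)⟩

theorem isSaturated_of_inter_latticePoints_eq (hS : S ⊆ latticePoints n)
    (h₀ : (0 : Fin n → ℝ) ∈ S) {m : ℕ} (hm : n ≤ m + 1)
    (heq : (m : ℝ) • convexHull ℝ S ∩ latticePoints n = m • (convexHull ℝ S ∩ latticePoints n)) :
    IsSaturated (convexHull ℝ S) := by
  obtain ⟨m, hm₁, hm, heq⟩ : ∃ m' : ℕ, 1 ≤ m' ∧ n ≤ m' + 1 ∧ (m' : ℝ) • convexHull ℝ S ∩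
      latticePoints n = m' • (convexHull ℝ S ∩ latticePoints n) := by
    rcases m.eq_zero_or_pos with rfl | h
    · exact ⟨1, le_rfl, by omega, by simp⟩
    · exact ⟨m, h, hm, heq⟩
  intro x hx c hc hxc
  obtain ⟨t, htS, hli, μ, hμ, rfl⟩ := exists_linearIndepOn_of_mem_smul_convexHull hc hxc
  have hcard : t.card ≤ n := by
    simpa using (show LinearIndependent ℝ ((↑) : t → Fin n → ℝ) from hli).fintype_card_le_finrank
  rw [← Finset.sum_coe_sort] at hx ⊢
  exact exists_mem_nsmul_of_linearIndependent (convex_convexHull ℝ S) (subset_convexHull ℝ S h₀)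
    hm₁ heq (fun i => ⟨subset_convexHull ℝ S (htS i.2), hS (htS i.2)⟩) hli
    (by simpa using hcard.trans hm) (fun i => hμ i i.2) hx

theorem unperforated_iff_isSaturated (hS : S ⊆ latticePoints n) (h₀ : (0 : Fin n → ℝ) ∈ S) :
    Unperforated (⋃ k : ℕ, k • (convexHull ℝ S ∩ latticePoints n)) ↔
      IsSaturated (convexHull ℝ S) := by
  constructor
  · intro hU x hx c hc hxc
    obtain ⟨t, htS, hli, μ, hμ, rfl⟩ := exists_linearIndepOn_of_mem_smul_convexHull hc hxc
    rw [← Finset.sum_coe_sort] at hx ⊢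
    obtain ⟨d, hd, hdμ⟩ := exists_nat_mul_eq_intCast_of_linearIndependent
      (fun i => hS (htS i.2)) hli hx
    choose z hz using hdμ
    have hdx : (d : ℝ) • ∑ i : t, μ i • (i : Fin n → ℝ) =
        ∑ i : t, (z i).toNat • (i : Fin n → ℝ) := by
      rw [Finset.smul_sum]
      refine Finset.sum_congr rfl fun i _ => ?_
      have hz₀ : (0 : ℝ) ≤ z i := hz i ▸ mul_nonneg d.cast_nonneg (hμ i i.2)
      rw [smul_smul, hz i, ← Nat.cast_smul_eq_nsmul ℝ, ← Int.cast_natCast,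
        Int.toNat_of_nonneg (by exact_mod_cast hz₀)]
    have hdxA : (d : ℝ) • ∑ i : t, μ i • (i : Fin n → ℝ) ∈
        (∑ i : t, (z i).toNat) • (convexHull ℝ S ∩ latticePoints n) := by
      rw [hdx]
      exact Set.sum_nsmul_mem_nsmul _ _ fun i _ =>
        ⟨subset_convexHull ℝ S (htS i.2), hS (htS i.2)⟩
    exact Set.mem_iUnion.1 (hU _ hx d hd (Set.mem_iUnion.2 ⟨_, hdxA⟩))
  · intro hsat x hx p hp hpx
    obtain ⟨k, hk⟩ := Set.mem_iUnion.1 hpx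
    have hkK := (convex_convexHull ℝ S).nsmul_subset_smul ⟨0, subset_convexHull ℝ S h₀⟩
      Set.inter_subset_left k hk
    have hxK : x ∈ ((p : ℝ)⁻¹ * k) • convexHull ℝ S := by
      have := Set.smul_mem_smul_set (a := (p : ℝ)⁻¹) hkK
      rwa [inv_smul_smul₀ (by positivity), smul_smul] at this
    exact Set.mem_iUnion.2 (hsat x hx _ (by positivity) hxK)

end Saturation

section Vertices

variable {K S : Set (Fin n → ℝ)}

theorem latticeCone_eq_iUnion_nsmul {v : Fin n → ℝ} (hv : v ∈ K) :
    latticeCone K v = ⋃ k : ℕ, k • ((fun x => x - v) '' K ∩ latticePoints n) := by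
  have h₀ : (0 : Fin n → ℝ) ∈ (fun x => x - v) '' K ∩ latticePoints n :=
    ⟨⟨v, hv, sub_self v⟩, (latticeAddSubgroup n).zero_mem⟩
  simp only [latticeCone, nsmulSet_eq_nsmul]
  refine subset_antisymm (Set.iUnion₂_subset fun k _ => Set.subset_iUnion (fun k : ℕ => k • _) k)
    (Set.iUnion_subset fun k x hx => Set.mem_iUnion₂.2 ⟨k + 1, k.succ_pos, ?_⟩)
  exact Set.nsmul_subset_nsmul_right h₀ k.le_succ hx

theorem locallySolid_iff_isSaturated (hS : S ⊆ latticePoints n) :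
    LocallySolid (convexHull ℝ S) ↔ ∀ v ∈ (convexHull ℝ S).extremePoints ℝ,
      IsSaturated ((fun x => x - v) '' convexHull ℝ S) := by
  refine forall₂_congr fun v hv => ?_
  have hvS : v ∈ S := extremePoints_convexHull_subset hv
  rw [latticeCone_eq_iUnion_nsmul hv.1, image_sub_convexHull]
  exact unperforated_iff_isSaturated (image_sub_subset_latticePoints hS (hS hvS))
    ⟨v, hvS, sub_self v⟩

theorem inter_latticePoints_image_sub_eq {v : Fin n → ℝ} (hv : v ∈ latticePoints n) {m : ℕ}
    (heq : (m : ℝ) • K ∩ latticePoints n = m • (K ∩ latticePoints n)) :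
    (m : ℝ) • ((fun x => x - v) '' K) ∩ latticePoints n =
      m • ((fun x => x - v) '' K ∩ latticePoints n) := by
  rw [smul_image_sub, image_sub_inter_latticePoints (natCast_smul_mem_latticePoints hv m), heq,
    image_sub_inter_latticePoints hv, nsmul_image_sub, Nat.cast_smul_eq_nsmul]

theorem locallySolid_of_inter_latticePoints_eq (hK : IsLatticePolytope K) {m : ℕ}
    (hm : n - 1 ≤ m) (heq : (m : ℝ) • K ∩ latticePoints n = m • (K ∩ latticePoints n)) :
    LocallySolid K := by
  obtain ⟨S, -, -, hS, rfl⟩ := hK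
  refine (locallySolid_iff_isSaturated hS).2 fun v hv => ?_
  have hvS : v ∈ S := extremePoints_convexHull_subset hv
  have heqv := inter_latticePoints_image_sub_eq (hS hvS) heq
  rw [image_sub_convexHull] at heqv ⊢
  exact isSaturated_of_inter_latticePoints_eq (image_sub_subset_latticePoints hS (hS hvS))
    ⟨v, hvS, sub_self v⟩ (by omega) heqv

end Vertices

section EventualEquality

open Filter

variable {S : Set (Fin n → ℝ)}

theorem exists_eq_add_nsmul_add (hS : S ⊆ latticePoints n) {m : ℕ} (hm : 0 < m)
    {z : Fin n → ℝ} (hz : z ∈ (m : ℝ) • convexHull ℝ S ∩ latticePoints n) :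
    ∃ v ∈ S, ∃ r ≤ n, ∃ w ∈ (r : ℝ) • convexHull ℝ S ∩ latticePoints n, ∃ j l : ℕ,
      m < (n + 1) * (j + 1) ∧ r + j + l = m ∧
      ∃ y ∈ l • (convexHull ℝ S ∩ latticePoints n), z = w + j • v + y := by
  obtain ⟨t, htS, hcard, μ, hμ, hμm, rfl⟩ :=
    exists_finset_sum_smul_eq_of_mem_smul_convexHull m.cast_nonneg hz.1
  rw [Module.finrank_fin_fun] at hcard
  have hA (u : Fin n → ℝ) (hu : u ∈ t) : u ∈ convexHull ℝ S ∩ latticePoints n :=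
    ⟨subset_convexHull ℝ S (htS hu), hS (htS hu)⟩
  have htne : t.Nonempty := Finset.nonempty_iff_ne_empty.2 fun h => by
    simp only [h, Finset.sum_empty] at hμm
    exact (Nat.cast_ne_zero.2 hm.ne') hμm.symm
  obtain ⟨v, hvt, hvmax⟩ := t.exists_max_image μ htne
  set j := ⌊μ v⌋₊
  set l := ∑ u ∈ t.erase v, ⌊μ u⌋₊
  set w := ∑ u ∈ t, (μ u - ⌊μ u⌋₊) • u
  have hfloor : ∑ u ∈ t, ⌊μ u⌋₊ = j + l := (Finset.add_sum_erase t _ hvt).symm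
  have hjl : j + l ≤ m := by
    have : ((j + l : ℕ) : ℝ) ≤ m := by
      rw [← hfloor, Nat.cast_sum, ← hμm]
      exact Finset.sum_le_sum fun u hu => Nat.floor_le (hμ u hu)
    exact_mod_cast this
  have hr : ∑ u ∈ t, (μ u - ⌊μ u⌋₊) = ((m - (j + l) : ℕ) : ℝ) := by
    rw [Finset.sum_sub_distrib, hμm, ← Nat.cast_sum, hfloor, Nat.cast_sub hjl]
  have hsplit : ∑ u ∈ t, μ u • u = w + ∑ u ∈ t, ⌊μ u⌋₊ • u := by
    simp only [w, sub_smul, Finset.sum_sub_distrib, ← Nat.cast_smul_eq_nsmul ℝ, sub_add_cancel]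
  refine ⟨v, htS hvt, m - (j + l), ?_, w, ⟨?_, ?_⟩, j, l, ?_, by omega, _,
    Set.sum_nsmul_mem_nsmul _ _ fun u hu => hA u (Finset.mem_of_mem_erase hu), ?_⟩
  · have : ((m - (j + l) : ℕ) : ℝ) < t.card := by
      rw [← hr]
      simpa using Finset.sum_lt_sum_of_nonempty htne fun u _ => sub_lt_iff_lt_add'.2
        (Nat.lt_floor_add_one (μ u))
    have : m - (j + l) < t.card := by exact_mod_cast this
    omega
  · rw [← hr]
    exact (convex_convexHull ℝ S).sum_smul_mem_smul ⟨v, (hA v hvt).1⟩ t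
      (fun u hu => sub_nonneg.2 (Nat.floor_le (hμ u hu))) fun u hu => (hA u hu).1
  · rw [eq_sub_of_add_eq hsplit.symm]
    exact (latticeAddSubgroup n).sub_mem hz.2 (sum_mem fun u hu => nsmul_mem (hA u hu).2 _)
  · have h₁ : (m : ℝ) ≤ t.card * μ v := by
      simpa [hμm] using Finset.sum_le_card_nsmul t μ (μ v) hvmax
    have h₂ : (t.card : ℝ) ≤ n + 1 := by exact_mod_cast hcard
    have h₃ : μ v < j + 1 := Nat.lt_floor_add_one _
    have : (m : ℝ) < (n + 1) * (j + 1) := by nlinarith [hμ v hvt]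
    exact_mod_cast this
  · rw [hsplit, ← Finset.add_sum_erase t _ hvt, add_assoc]

theorem IsSaturated.eventually_add_nsmul_mem_nsmul {K : Set (Fin n → ℝ)} {v : Fin n → ℝ}
    (hsat : IsSaturated ((fun x => x - v) '' K)) (hvK : v ∈ K) (hv : v ∈ latticePoints n)
    {r : ℕ} {w : Fin n → ℝ} (hw : w ∈ (r : ℝ) • K ∩ latticePoints n) :
    ∀ᶠ j : ℕ in atTop, w + j • v ∈ (r + j) • (K ∩ latticePoints n) := by
  have hmem : w - (r : ℝ) • v ∈ (r : ℝ) • ((fun x => x - v) '' K) := by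
    rw [smul_image_sub]
    exact ⟨w, hw.1, rfl⟩
  obtain ⟨k, hk⟩ := hsat _ ((latticeAddSubgroup n).sub_mem hw.2
    (natCast_smul_mem_latticePoints hv r)) r r.cast_nonneg hmem
  have h₀ : (0 : Fin n → ℝ) ∈ (fun x => x - v) '' K ∩ latticePoints n :=
    ⟨⟨v, hvK, sub_self v⟩, (latticeAddSubgroup n).zero_mem⟩
  filter_upwards [eventually_ge_atTop k] with j hj
  have := Set.nsmul_subset_nsmul_right h₀ (show k ≤ r + j by omega) hk
  rw [image_sub_inter_latticePoints hv, nsmul_image_sub] at this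
  obtain ⟨a, ha, hax⟩ := this
  simp only [Nat.cast_smul_eq_nsmul] at hax
  have : a = w + j • v := by
    rw [← sub_add_cancel a ((r + j) • v), hax, add_nsmul]
    abel
  exact this ▸ ha

theorem eventually_forall_add_nsmul_mem_nsmul (hS : S.Finite) (hSl : S ⊆ latticePoints n)
    (hsat : ∀ v ∈ S, IsSaturated ((fun x => x - v) '' convexHull ℝ S)) :
    ∀ᶠ j : ℕ in atTop, ∀ v ∈ S, ∀ r ∈ Set.Iic n, ∀ w ∈ (r : ℝ) • convexHull ℝ S ∩ latticePoints n,
      w + j • v ∈ (r + j) • (convexHull ℝ S ∩ latticePoints n) := by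
  have hbdd := (hS.isCompact_convexHull ℝ).isBounded
  refine hS.eventually_all.2 fun v hv => (Set.finite_Iic n).eventually_all.2 fun r _ =>
    (hbdd.smul₀ (r : ℝ)).finite_inter_latticePoints.eventually_all.2 fun w hw =>
      (hsat v hv).eventually_add_nsmul_mem_nsmul (subset_convexHull ℝ S hv) (hSl hv) hw

theorem eventually_inter_latticePoints_subset (hS : S.Finite) (hSl : S ⊆ latticePoints n)
    (hsat : ∀ v ∈ S, IsSaturated ((fun x => x - v) '' convexHull ℝ S)) :
    ∀ᶠ m : ℕ in atTop, (m : ℝ) • convexHull ℝ S ∩ latticePoints n ⊆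
      m • (convexHull ℝ S ∩ latticePoints n) := by
  obtain ⟨j₀, hj₀⟩ := (eventually_forall_add_nsmul_mem_nsmul hS hSl hsat).exists_forall_of_atTop
  filter_upwards [eventually_ge_atTop ((n + 1) * (j₀ + 1))] with m hm z hz
  obtain ⟨v, hv, r, hr, w, hw, j, l, hmj, rfl, y, hy, rfl⟩ :=
    exists_eq_add_nsmul_add hSl ((Nat.mul_pos n.succ_pos j₀.succ_pos).trans_le hm) hz
  have hj : j₀ ≤ j := by
    by_contra! h
    nlinarith
  exact Set.add_mem_add_nsmul (hj₀ j hj v hv r hr w hw) hy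

theorem LocallySolid.eventually_inter_latticePoints_eq {K : Set (Fin n → ℝ)}
    (hK : IsLatticePolytope K) (h : LocallySolid K) :
    ∀ᶠ m : ℕ in atTop, (m : ℝ) • K ∩ latticePoints n = m • (K ∩ latticePoints n) := by
  obtain ⟨S, hSf, hS₀, hS, rfl⟩ := hK
  obtain ⟨V, hVS, hV, hsat⟩ : ∃ V ⊆ S, convexHull ℝ V = convexHull ℝ S ∧
      ∀ v ∈ V, IsSaturated ((fun x => x - v) '' convexHull ℝ S) := by
    refine ⟨_, extremePoints_convexHull_subset, ?_, (locallySolid_iff_isSaturated hS).1 h⟩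
    rw [← ((hSf.subset extremePoints_convexHull_subset).isClosed_convexHull ℝ).closure_eq]
    exact closure_convexHull_extremePoints (hSf.isCompact_convexHull ℝ) (convex_convexHull ℝ S)
  rw [← hV] at hsat
  have hsub := eventually_inter_latticePoints_subset (hSf.subset hVS) (hVS.trans hS) hsat
  rw [hV] at hsub
  filter_upwards [hsub] with m hm
  refine hm.antisymm fun z hz => ⟨?_, nsmul_subset_latticePoints Set.inter_subset_right m hz⟩
  exact (convex_convexHull ℝ S).nsmul_subset_smul (hS₀.mono (subset_convexHull ℝ S))
    Set.inter_subset_left m hz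

end EventualEquality

theorem locallySolid_tfae_general (n : ℕ) (K : Set (Fin n → ℝ))
    (hK : IsLatticePolytope K) :
    (LocallySolid K ↔
      ∃ m : ℕ, n - 1 ≤ m ∧
        ((m : ℝ) • K) ∩ latticePoints n = nsmulSet m (K ∩ latticePoints n)) ∧
    (LocallySolid K ↔
      {m : ℕ | 0 < m ∧
        ((m : ℝ) • K) ∩ latticePoints n ≠ nsmulSet m (K ∩ latticePoints n)}.Finite) := by
  simp only [nsmulSet_eq_nsmul]
  have hba : (∃ m : ℕ, n - 1 ≤ m ∧ (m : ℝ) • K ∩ latticePoints n = m • (K ∩ latticePoints n)) →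
      LocallySolid K := fun ⟨m, hm, heq⟩ => locallySolid_of_inter_latticePoints_eq hK hm heq
  have hac (h : LocallySolid K) : {m : ℕ | 0 < m ∧
      (m : ℝ) • K ∩ latticePoints n ≠ m • (K ∩ latticePoints n)}.Finite := by
    have := h.eventually_inter_latticePoints_eq hK
    rw [← Nat.cofinite_eq_atTop, Filter.eventually_cofinite] at this
    exact this.subset fun m hm => hm.2
  have hcb (hfin : {m : ℕ | 0 < m ∧
      (m : ℝ) • K ∩ latticePoints n ≠ m • (K ∩ latticePoints n)}.Finite) :
      ∃ m : ℕ, n - 1 ≤ m ∧ (m : ℝ) • K ∩ latticePoints n = m • (K ∩ latticePoints n) := by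
    have := (Nat.cofinite_eq_atTop ▸ hfin.eventually_cofinite_notMem).and
      (Filter.eventually_ge_atTop (n + 1))
    obtain ⟨m, hm, hnm⟩ := this.exists
    exact ⟨m, by omega, by simpa [show 0 < m by omega] using hm⟩
  exact ⟨⟨fun h => hcb (hac h), hba⟩, ⟨hac, fun h => hba (hcb h)⟩⟩

/-- Let `K` be a projectively faithful lattice polytope in `ℝ^n`.  The following are
equivalent: (a) `K` is locally solid; (b) `mK ∩ ℤ^n = m(K ∩ ℤ^n)` for some integer
`m ≥ n - 1`; (c) `mK ∩ ℤ^n = m(K ∩ ℤ^n)` for all but finitely many positive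
integers `m`. -/
theorem locallySolid_tfae (n : ℕ) (K : Set (Fin n → ℝ))
    (hK : IsLatticePolytope K) (hpf : ProjectivelyFaithful K) :
    (LocallySolid K ↔
      ∃ m : ℕ, n - 1 ≤ m ∧
        ((m : ℝ) • K) ∩ latticePoints n = nsmulSet m (K ∩ latticePoints n)) ∧
    (LocallySolid K ↔
      {m : ℕ | 0 < m ∧
        ((m : ℝ) • K) ∩ latticePoints n ≠ nsmulSet m (K ∩ latticePoints n)}.Finite) :=
  locallySolid_tfae_general n K hK
end

section
/- Let n ≥ 4, let d and a(1), ..., a(n−1) be integers with 0 < a(i) < d for every i and Σ_{i=1}^{n−1} a(i) < d, let a = (a(1), ..., a(n−1), d)^T, and let K be the convex hull in ℝ^n of {0, e_1, ..., e_{n−1}, a}. If a lattice point x in the cone C = ⋃_{i≥1}(iK ∩ ℤ^n) has nonzero last coordinate, then all coordinates of x are strictly positive. -/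
/-!
Every generator `0`, `e_i` (`i < n`) and `a` of `K` satisfies `y_n ≥ 0` and `d • y ≥ y_n • a`.
These inequalities cut out a convex cone, which therefore contains `K` and all its dilations,
hence `C`. On that cone `y_n > 0` forces `y_i ≥ a(i) y_n / d > 0` for every `i`.
-/

open Pointwise

section DominatingCone

variable {𝕜 ι : Type*} [Field 𝕜] [LinearOrder 𝕜] [IsStrictOrderedRing 𝕜]

/-- For `v l > 0`, the points `y` with `y l ≥ 0` and `y ≥ (y l / v l) • v`. -/
def dominatingCone (v : ι → 𝕜) (l : ι) : ConvexCone 𝕜 (ι → 𝕜) where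
  carrier := {y | 0 ≤ y l ∧ y l • v ≤ v l • y}
  smul_mem' c hc y hy := by
    refine ⟨mul_nonneg hc.le hy.1, ?_⟩
    simpa only [Pi.smul_apply, smul_eq_mul, mul_smul, smul_comm (v l) c y]
      using smul_le_smul_of_nonneg_left hy.2 hc.le
  add_mem' y hy z hz := by
    refine ⟨add_nonneg hy.1 hz.1, ?_⟩
    simpa only [Pi.add_apply, add_smul, smul_add] using add_le_add hy.2 hz.2

variable {v : ι → 𝕜} {l : ι}

theorem zero_mem_dominatingCone : (0 : ι → 𝕜) ∈ dominatingCone v l :=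
  ⟨le_rfl, by simp⟩

theorem self_mem_dominatingCone (hv : 0 ≤ v l) : v ∈ dominatingCone v l :=
  ⟨hv, le_rfl⟩

theorem single_mem_dominatingCone [DecidableEq ι] {i : ι} (hi : i ≠ l) (hv : 0 ≤ v l) :
    Pi.single i 1 ∈ dominatingCone v l := by
  refine ⟨by simp [Pi.single_eq_of_ne' hi], ?_⟩
  rw [Pi.single_eq_of_ne' hi, zero_smul]
  exact smul_nonneg hv (Pi.single_nonneg.2 zero_le_one)

theorem pos_of_mem_dominatingCone (hv : ∀ j, 0 < v j) {y : ι → 𝕜}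
    (hy : y ∈ dominatingCone v l) (hyl : y l ≠ 0) (j : ι) : 0 < y j := by
  have hylpos : 0 < y l := lt_of_le_of_ne hy.1 hyl.symm
  have hj : y l * v j ≤ v l * y j := hy.2 j
  exact pos_of_mul_pos_right ((mul_pos hylpos (hv j)).trans_le hj) (hv l).le

end DominatingCone

/-- With `K` the convex hull of `{0, e_1, …, e_{n-1}, a}` as in Example 4 (`n ≥ 4`,
`0 < a i < d` for `i < n - 1`, `∑_{i<n-1} a i < d`, last coordinate of `a` equal to `d`),
any point `x` of the cone `C = ⋃_{i ≥ 1} (iK ∩ ℤ^n)` whose last coordinate is nonzero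
has all coordinates strictly positive. -/
theorem example4_cone_positive (n : ℕ) (hn : 4 ≤ n) (d : ℤ) (a : Fin n → ℤ)
    (ha : ∀ i : Fin n, (i : ℕ) < n - 1 → 0 < a i ∧ a i < d)
    (hlast : a ⟨n - 1, by omega⟩ = d)
    (S : Set (Fin n → ℝ))
    (hS : S = {0} ∪ {x | ∃ i : Fin n, (i : ℕ) < n - 1 ∧ x = Pi.single i 1} ∪
      {fun i => (a i : ℝ)})
    (K : Set (Fin n → ℝ)) (hK : K = convexHull ℝ S)
    (C : Set (Fin n → ℝ))
    (hC : C = ⋃ (i : ℕ) (_ : 1 ≤ i), ((i : ℝ) • K ∩ latticePoints n))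
    (x : Fin n → ℝ) (hx : x ∈ C) (hxlast : x ⟨n - 1, by omega⟩ ≠ 0) :
    ∀ i, 0 < x i := by
  set last : Fin n := ⟨n - 1, by omega⟩
  have ha_pos (i : Fin n) : (0 : ℝ) < a i := by
    have hd := ha ⟨0, by omega⟩ (by simp only; omega)
    rcases lt_or_ge (i : ℕ) (n - 1) with hi | hi
    · exact_mod_cast (ha i hi).1
    · rw [show i = last from Fin.ext (by simp only [last]; omega), hlast]
      exact_mod_cast hd.1.trans hd.2
  set cone := dominatingCone (fun i => (a i : ℝ)) last
  have hSK : S ⊆ cone := by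
    rw [hS]
    rintro y ((rfl | ⟨i, hi, rfl⟩) | rfl)
    · exact zero_mem_dominatingCone
    · exact single_mem_dominatingCone (Fin.ne_of_lt hi) (ha_pos last).le
    · exact self_mem_dominatingCone (ha_pos last).le
  have hKcone : K ⊆ cone := hK ▸ convexHull_min hSK cone.convex
  rw [hC] at hx
  simp only [Set.mem_iUnion, Set.mem_inter_iff] at hx
  obtain ⟨m, hm, ⟨y, hy, rfl⟩, -⟩ := hx
  exact pos_of_mem_dominatingCone ha_pos
    (cone.smul_mem (by exact_mod_cast hm) (hKcone hy)) hxlast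
end
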